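/- arXiv:2404.08079 — 3 statements merged into one kernel-verified Lean document; each statement's English description precedes it below -/
import Mathlib

section
/- Let A be a real symmetric doubly stochastic m×m matrix and P an m×m permutation matrix such that AP is symmetric. Then AP is doubly stochastic, and writing the eigenvalues of a symmetric matrix M in decreasing order λ₁(M) ≥ ⋯ ≥ λ_m(M), one has max{|λ₂(AP)|, |λ_m(AP)|} ≤ max{|λ₂(A)|, |λ_m(A)|}. (In words: the spectral-gap parameter √ρ' of the merged matrix AP is no larger than the spectral-gap parameter √ρ of A.) -/
open Matrix Polynomial

/-!
Since `A` and `A * P` are symmetric and `P` is orthogonal,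
`(A * P) * (A * P) = A * P * Pᵀ * A = A * A`, so `A * P` and `A` have the same squared
eigenvalues, hence the same multiset of absolute values of eigenvalues. A stochastic matrix has
the eigenvalue `1` and all its eigenvalues lie in `[-1, 1]` (Gershgorin), so `|λ₁(A * P)| = 1` is
the largest entry of that multiset. Removing it leaves a multiset whose maximum is, by
monotonicity, `max |λ₂| |λ_m|` for either matrix.
-/

theorem Polynomial.roots_prod_X_sub_C_comp {R ι : Type*} [CommRing R] [IsDomain R]
    (s : Finset ι) (f : ι → R) : (∏ i ∈ s, (X - C (f i))).roots = s.val.map f := by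
  rw [roots_prod _ _ (monic_prod_of_monic _ _ fun i _ => monic_X_sub_C (f i)).ne_zero]
  simp [Multiset.bind_singleton]

theorem Multiset.map_abs_eq_of_map_sq_eq {s t : Multiset ℝ}
    (h : s.map (· ^ 2) = t.map (· ^ 2)) : s.map abs = t.map abs := by
  have key : ∀ u : Multiset ℝ, u.map abs = (u.map (· ^ 2)).map Real.sqrt := fun u => by
    rw [Multiset.map_map]
    exact Multiset.map_congr rfl fun x _ => (Real.sqrt_sq_eq_abs x).symm
  rw [key, key, h]

theorem le_of_univ_map_eq {ι α : Type*} [Fintype ι] [LinearOrder α] {f g : ι → α}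
    (hfg : Finset.univ.val.map f = Finset.univ.val.map g) {i₀ : ι} (hf : ∀ i, f i ≤ f i₀)
    {t : α} (hg : ∀ i ≠ i₀, g i ≤ t) {i : ι} (hi : i ≠ i₀) : f i ≤ t := by
  classical
  have hcount : ∀ h : ι → α,
      (Finset.univ.val.map h).countP (t < ·) = (Finset.univ.filter (t < h ·)).card := fun h => by
    rw [Multiset.countP_map]; rfl
  by_contra! hti
  have hf2 : 2 ≤ (Finset.univ.filter (t < f ·)).card := by
    rw [← Finset.card_pair hi]
    refine Finset.card_le_card fun j hj => ?_
    rcases Finset.mem_insert.mp hj with rfl | hj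
    · simpa using hti
    · simpa [Finset.mem_singleton.mp hj] using hti.trans_le (hf i)
  have hg1 : (Finset.univ.filter (t < g ·)).card ≤ 1 := by
    refine (Finset.card_le_card fun j hj => Finset.mem_singleton.mpr ?_).trans
      (Finset.card_singleton i₀).le
    by_contra hj₀
    exact (Finset.mem_filter.mp hj).2.not_ge (hg j hj₀)
  have hcard := congrArg (Multiset.countP (t < ·)) hfg
  rw [hcount, hcount] at hcard
  omega

namespace Matrix

variable {n : Type*} [Fintype n] [DecidableEq n]

theorem permMatrix_mul_transpose {R : Type*} [NonAssocSemiring R] (σ : Equiv.Perm n) :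
    σ.permMatrix R * (σ.permMatrix R)ᵀ = 1 := by
  rw [transpose_permMatrix, ← permMatrix_mul, inv_mul_cancel, permMatrix_one]

theorem mul_self_eq_of_isSymm_mul {R : Type*} [CommRing R] {A P : Matrix n n R} (hA : A.IsSymm)
    (hAP : (A * P).IsSymm) (hP : P * Pᵀ = 1) : A * P * (A * P) = A * A :=
  calc A * P * (A * P) = A * P * (A * P)ᵀ := by rw [hAP.eq]
    _ = A * (P * Pᵀ) * Aᵀ := by simp only [transpose_mul, Matrix.mul_assoc]
    _ = A * A := by rw [hP, Matrix.mul_one, hA.eq]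

theorem IsHermitian.roots_charpoly_mul_self {𝕜 : Type*} [RCLike 𝕜] {M : Matrix n n 𝕜}
    (hM : M.IsHermitian) : (M * M).charpoly.roots = M.charpoly.roots.map (· ^ 2) := by
  rw [← sq, ← cfc_pow_id (R := ℝ) M 2 hM.isSelfAdjoint, hM.charpoly_cfc_eq,
    hM.roots_charpoly_eq_eigenvalues, roots_prod_X_sub_C_comp, Multiset.map_map]
  simp

theorem one_mem_roots_charpoly_of_mem_rowStochastic {R : Type*} [CommRing R] [PartialOrder R]
    [IsOrderedRing R] [IsDomain R] [Nonempty n] {M : Matrix n n R} (hM : M ∈ rowStochastic R n) :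
    (1 : R) ∈ M.charpoly.roots := by
  rw [mem_roots M.charpoly_monic.ne_zero, ← charpoly_toLin',
    ← Module.End.hasEigenvalue_iff_isRoot_charpoly]
  refine Module.End.hasEigenvalue_of_hasEigenvector (x := 1) ⟨?_, one_ne_zero⟩
  rw [Module.End.mem_eigenspace_iff, toLin'_apply, one_vecMul_of_mem_rowStochastic hM, one_smul]

theorem abs_le_one_of_mem_roots_charpoly {M : Matrix n n ℝ} (hM : M ∈ rowStochastic ℝ n)
    {r : ℝ} (hr : r ∈ M.charpoly.roots) : |r| ≤ 1 := by
  rw [mem_roots M.charpoly_monic.ne_zero, ← charpoly_toLin',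
    ← Module.End.hasEigenvalue_iff_isRoot_charpoly] at hr
  obtain ⟨k, hk⟩ := eigenvalue_mem_ball hr
  have hkk : 0 ≤ M k k := nonneg_of_mem_rowStochastic hM
  have hrow : ∑ j ∈ Finset.univ.erase k, ‖M k j‖ = 1 - M k k := by
    simp_rw [Real.norm_of_nonneg (nonneg_of_mem_rowStochastic hM)]
    rw [Finset.sum_erase_eq_sub (Finset.mem_univ k), sum_row_of_mem_rowStochastic hM]
  rw [Metric.mem_closedBall, Real.dist_eq, hrow, abs_le] at hk
  rw [abs_le]
  constructor <;> linarith [hk.1, hk.2]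

theorem abs_le_of_roots_charpoly_eq_map [Nonempty n] {M : Matrix n n ℝ}
    (hM : M ∈ rowStochastic ℝ n) {ι : Type*} [Fintype ι] [Preorder ι] {μ : ι → ℝ}
    (hμ : Antitone μ) (hroots : M.charpoly.roots = Finset.univ.val.map μ) {i₀ : ι}
    (hi₀ : IsBot i₀) (i : ι) : |μ i| ≤ μ i₀ := by
  obtain ⟨j, -, hj⟩ :=
    Multiset.mem_map.mp (hroots ▸ one_mem_roots_charpoly_of_mem_rowStochastic hM)
  calc |μ i| ≤ 1 := abs_le_one_of_mem_roots_charpoly hM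
        (hroots ▸ Multiset.mem_map_of_mem μ (Finset.mem_univ i))
    _ = μ j := hj.symm
    _ ≤ μ i₀ := hμ (hi₀ j)

end Matrix

/-- Let `A` be a real symmetric doubly stochastic `m×m` matrix and `P`
a permutation matrix such that `A * P` is symmetric. Then `A * P` is doubly stochastic,
and — writing the eigenvalues of `A * P` (resp. `A`) in decreasing order as the antitone
enumerations `μ` (resp. `ν`) of the roots of the characteristic polynomial —
`max {|λ₂(AP)|, |λ_m(AP)|} ≤ max {|λ₂(A)|, |λ_m(A)|}`. -/
theorem perm_mul_doublyStochastic_spectral_gap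
    {m : ℕ} (hm : 2 ≤ m) (A P : Matrix (Fin m) (Fin m) ℝ)
    (hA : A.IsSymm) (hAds : A ∈ doublyStochastic ℝ (Fin m))
    (hP : ∃ σ : Equiv.Perm (Fin m), P = σ.permMatrix ℝ)
    (hAP : (A * P).IsSymm)
    (μ ν : Fin m → ℝ) (hμmono : Antitone μ) (hνmono : Antitone ν)
    (hcharAP : (A * P).charpoly = ∏ l, (X - C (μ l)))
    (hcharA : A.charpoly = ∏ l, (X - C (ν l))) :
    (A * P) ∈ doublyStochastic ℝ (Fin m) ∧
    max |μ ⟨1, by omega⟩| |μ ⟨m - 1, by omega⟩| ≤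
      max |ν ⟨1, by omega⟩| |ν ⟨m - 1, by omega⟩| := by
  obtain ⟨σ, rfl⟩ := hP
  have hAPds := mul_mem hAds (permMatrix_mem_doublyStochastic (σ := σ))
  refine ⟨hAPds, ?_⟩
  have habs : Finset.univ.val.map (|μ ·|) = Finset.univ.val.map (|ν ·|) := by
    have hsq := congrArg (·.charpoly.roots)
      (mul_self_eq_of_isSymm_mul hA hAP (permMatrix_mul_transpose σ))
    simp only [(isHermitian_iff_isSymm.mpr hA).roots_charpoly_mul_self,
      (isHermitian_iff_isSymm.mpr hAP).roots_charpoly_mul_self, hcharAP, hcharA,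
      roots_prod_X_sub_C_comp] at hsq
    have h := Multiset.map_abs_eq_of_map_sq_eq hsq
    rwa [Multiset.map_map, Multiset.map_map] at h
  set i₀ : Fin m := ⟨0, by omega⟩
  have : Nonempty (Fin m) := ⟨i₀⟩
  have hμ (i : Fin m) : |μ i| ≤ |μ i₀| :=
    (abs_le_of_roots_charpoly_eq_map
      (mem_doublyStochastic_iff_mem_rowStochastic_and_mem_colStochastic.mp hAPds).1 hμmono
      (hcharAP ▸ roots_prod_X_sub_C_comp Finset.univ μ) (fun j => Fin.le_def.mpr j.val.zero_le)
      i).trans (le_abs_self _)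
  have hν (j : Fin m) (hj : j ≠ i₀) :
      |ν j| ≤ max |ν ⟨1, by omega⟩| |ν ⟨m - 1, by omega⟩| := by
    have hj₁ : j.val ≠ 0 := fun h => hj (Fin.ext h)
    rw [max_comm]
    exact abs_le_max_abs_abs (hνmono (show j.val ≤ m - 1 by omega))
      (hνmono (show 1 ≤ j.val by omega))
  exact max_le (le_of_univ_map_eq habs hμ hν (by simp [i₀]))
    (le_of_univ_map_eq habs hμ hν (by simp [i₀, Fin.ext_iff]; omega))
end

section
/- Let 0 ≤ β < 1 and α ∈ ℝ, and let (x̄_k)_{k≥0}, (v̄_k)_{k≥0}, (ḡ_k)_{k≥0} be sequences in ℝ^d satisfying v̄_0 = 0, v̄_{k+1} = β·v̄_k − α·ḡ_k and x̄_{k+1} = x̄_k + v̄_{k+1} for all k ≥ 0. Define p̄_0 = x̄_0 and p̄_k = (1/(1−β))·x̄_k − (β/(1−β))·x̄_{k−1} for k ≥ 1. Then for every K ≥ 1: ∑_{k=1}^K ‖p̄_k − x̄_k‖² ≤ (α²β²/(1−β)⁴)·∑_{k=0}^{K−1} ‖ḡ_k‖². -/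
/-!
The auxiliary sequence differs from the iterate by a multiple of the momentum buffer,
`p̄_{k+1} - x̄_{k+1} = (β/(1-β)) v̄_{k+1}`. Splitting `β v̄_k - α ḡ_k` as the convex combination
`β v̄_k + (1-β) (-α ḡ_k/(1-β))` gives `‖v̄_{k+1}‖² ≤ β ‖v̄_k‖² + α²/(1-β) ‖ḡ_k‖²`, and summing this
recursion from `v̄_0 = 0` bounds `∑ ‖v̄_{k+1}‖²` by `α²/(1-β)² ∑ ‖ḡ_k‖²`.
-/

open Finset

theorem extrapolation_sub_eq_smul {𝕜 E : Type*} [Field 𝕜] [AddCommGroup E] [Module 𝕜 E]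
    {β : 𝕜} (hβ : 1 - β ≠ 0) (x v : E) :
    ((1 / (1 - β)) • (x + v) - (β / (1 - β)) • x) - (x + v) = (β / (1 - β)) • v := by
  match_scalars <;> field_simp <;> ring

theorem mul_add_sq_le {β : ℝ} (hβ0 : 0 ≤ β) (hβ1 : β < 1) (s t : ℝ) :
    (β * s + t) ^ 2 ≤ β * s ^ 2 + t ^ 2 / (1 - β) := by
  have hβ : 0 < 1 - β := sub_pos.2 hβ1
  rw [← sub_nonneg]
  have key : β * s ^ 2 + t ^ 2 / (1 - β) - (β * s + t) ^ 2 = β * ((1 - β) * s - t) ^ 2 / (1 - β) := by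
    field_simp
    ring
  rw [key]
  positivity

theorem norm_smul_sub_smul_sq_le {E : Type*} [SeminormedAddCommGroup E] [NormedSpace ℝ E]
    {β : ℝ} (hβ0 : 0 ≤ β) (hβ1 : β < 1) (α : ℝ) (v g : E) :
    ‖β • v - α • g‖ ^ 2 ≤ β * ‖v‖ ^ 2 + α ^ 2 / (1 - β) * ‖g‖ ^ 2 := calc
  ‖β • v - α • g‖ ^ 2 ≤ (β * ‖v‖ + |α| * ‖g‖) ^ 2 := by
    gcongr
    calc ‖β • v - α • g‖ ≤ ‖β • v‖ + ‖α • g‖ := norm_sub_le _ _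
      _ = β * ‖v‖ + |α| * ‖g‖ := by rw [norm_smul, norm_smul, Real.norm_of_nonneg hβ0,
          Real.norm_eq_abs]
  _ ≤ β * ‖v‖ ^ 2 + (|α| * ‖g‖) ^ 2 / (1 - β) := mul_add_sq_le hβ0 hβ1 _ _
  _ = β * ‖v‖ ^ 2 + α ^ 2 / (1 - β) * ‖g‖ ^ 2 := by rw [mul_pow, sq_abs]; ring

theorem one_sub_mul_sum_range_succ_le {a c : ℕ → ℝ} {β : ℝ} (hβ : 0 ≤ β)
    (ha0 : a 0 = 0) (ha : ∀ k, 0 ≤ a k) (hrec : ∀ k, a (k + 1) ≤ β * a k + c k) (K : ℕ) :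
    (1 - β) * ∑ k ∈ range K, a (k + 1) ≤ ∑ k ∈ range K, c k := by
  have hshift : ∑ k ∈ range K, a k ≤ ∑ k ∈ range K, a (k + 1) := by
    have h := sum_range_succ' a K
    rw [ha0, add_zero, sum_range_succ] at h
    linarith [ha K]
  have hsum : ∑ k ∈ range K, a (k + 1) ≤ β * ∑ k ∈ range K, a k + ∑ k ∈ range K, c k := by
    rw [mul_sum, ← sum_add_distrib]
    exact sum_le_sum fun k _ => hrec k
  nlinarith [mul_le_mul_of_nonneg_left hshift hβ]

theorem msgd_auxiliary_distance_bound_general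
    {d : ℕ} (β α : ℝ) (hβ0 : 0 ≤ β) (hβ1 : β < 1)
    (xb vb gb pb : ℕ → EuclideanSpace ℝ (Fin d))
    (hv0 : vb 0 = 0)
    (hv : ∀ k, vb (k + 1) = β • vb k - α • gb k)
    (hx : ∀ k, xb (k + 1) = xb k + vb (k + 1))
    (hp : ∀ k, 1 ≤ k →
      pb k = (1 / (1 - β)) • xb k - (β / (1 - β)) • xb (k - 1)) :
    ∀ K, 1 ≤ K →
      ∑ k ∈ Finset.Icc 1 K, ‖pb k - xb k‖ ^ 2
        ≤ (α ^ 2 * β ^ 2 / (1 - β) ^ 4) * ∑ k ∈ Finset.range K, ‖gb k‖ ^ 2 := by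
  intro K _
  have hβ : 0 < 1 - β := sub_pos.2 hβ1
  have hdist (k : ℕ) : ‖pb (k + 1) - xb (k + 1)‖ ^ 2 = (β / (1 - β)) ^ 2 * ‖vb (k + 1)‖ ^ 2 := by
    rw [hp (k + 1) k.succ_pos, Nat.add_sub_cancel, hx k, extrapolation_sub_eq_smul hβ.ne',
      norm_smul, Real.norm_of_nonneg (by positivity), mul_pow]
  have hmomentum := one_sub_mul_sum_range_succ_le (a := fun k => ‖vb k‖ ^ 2) hβ0
    (by simp [hv0]) (fun _ => by positivity)
    (fun k => (hv k).symm ▸ norm_smul_sub_smul_sq_le hβ0 hβ1 α (vb k) (gb k)) K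
  simp only [← mul_sum] at hmomentum
  rw [← Ico_add_one_right_eq_Icc, sum_Ico_eq_sum_range, Nat.add_sub_cancel]
  simp only [add_comm 1, hdist, ← mul_sum]
  calc (β / (1 - β)) ^ 2 * ∑ k ∈ range K, ‖vb (k + 1)‖ ^ 2
      ≤ (β / (1 - β)) ^ 2 * ((α ^ 2 / (1 - β) * ∑ k ∈ range K, ‖gb k‖ ^ 2) / (1 - β)) := by
        gcongr
        rw [le_div_iff₀ hβ]
        linarith
    _ = α ^ 2 * β ^ 2 / (1 - β) ^ 4 * ∑ k ∈ range K, ‖gb k‖ ^ 2 := by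
        field_simp

/-- For the agent-averaged DIMAT-MSGD recursions
`v̄₀ = 0`, `v̄_{k+1} = β v̄_k − α ḡ_k`, `x̄_{k+1} = x̄_k + v̄_{k+1}` with `0 ≤ β < 1`, and
`p̄₀ = x̄₀`, `p̄_k = (1/(1−β)) x̄_k − (β/(1−β)) x̄_{k−1}` (`k ≥ 1`), one has
`∑_{k=1}^K ‖p̄_k − x̄_k‖² ≤ (α²β²/(1−β)⁴) ∑_{k=0}^{K−1} ‖ḡ_k‖²` for every `K ≥ 1`. -/
theorem msgd_auxiliary_distance_bound
    {d : ℕ} (β α : ℝ) (hβ0 : 0 ≤ β) (hβ1 : β < 1)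
    (xb vb gb pb : ℕ → EuclideanSpace ℝ (Fin d))
    (hv0 : vb 0 = 0)
    (hv : ∀ k, vb (k + 1) = β • vb k - α • gb k)
    (hx : ∀ k, xb (k + 1) = xb k + vb (k + 1))
    (hp0 : pb 0 = xb 0)
    (hp : ∀ k, 1 ≤ k →
      pb k = (1 / (1 - β)) • xb k - (β / (1 - β)) • xb (k - 1)) :
    ∀ K, 1 ≤ K →
      ∑ k ∈ Finset.Icc 1 K, ‖pb k - xb k‖ ^ 2
        ≤ (α ^ 2 * β ^ 2 / (1 - β) ^ 4) * ∑ k ∈ Finset.range K, ‖gb k‖ ^ 2 :=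
  msgd_auxiliary_distance_bound_general β α hβ0 hβ1 xb vb gb pb hv0 hv hx hp
end

section
/- Let n ≥ 1 and c₁, …, c_n ∈ ℝ; for r ∈ ℝ define h_i(r) = max{c_i, r} and h̄(r) = (1/n)∑_{i=1}^n h_i(r), and write c̄ = (1/n)∑_{i=1}^n c_i. Then: (i) the total dispersion ∑_{i=1}^n |h_i(r) − h̄(r)| is non-increasing in the truncation level r, i.e., for all r ≤ r' one has ∑_{i=1}^n |h_i(r') − h̄(r')| ≤ ∑_{i=1}^n |h_i(r) − h̄(r)|; and (ii) whenever r ≤ min_{i} c_i, one has ∑_{i=1}^n |h_i(r) − h̄(r)| = ∑_{i=1}^n |c_i − c̄|. -/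
/-!
Raising the floor `r` in `max (c i) r` only shrinks the gap between two entries that stay
apart. The total deviation `∑ |x i - x̄|` is monotone under shrinking gaps: it equals
`2 ∑_{i ∈ A} (x i - x̄)` for `A = {i | x̄ ≤ x i}` and is at least that for every other `A`, while
`n ∑_{i ∈ A} (x i - x̄) = ∑_{i ∈ A, j ∉ A} (x i - x j)` is a sum of gaps.
-/

open Finset

namespace Dispersion

variable {ι : Type*} [Fintype ι]

/-- The arithmetic mean; for empty `ι` it is the junk value `0`. -/
noncomputable def mean (x : ι → ℝ) : ℝ := (Fintype.card ι : ℝ)⁻¹ * ∑ i, x i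

noncomputable def totalDeviation (x : ι → ℝ) : ℝ := ∑ i, |x i - mean x|

lemma card_mul_mean (x : ι → ℝ) : (Fintype.card ι : ℝ) * mean x = ∑ i, x i := by
  cases isEmpty_or_nonempty ι
  · simp
  · rw [mean, mul_inv_cancel_left₀ (by positivity)]

lemma sum_sub_mean (x : ι → ℝ) : ∑ i, (x i - mean x) = 0 := by
  rw [sum_sub_distrib, sum_const, card_univ, nsmul_eq_mul, card_mul_mean, sub_self]

lemma totalDeviation_eq_two_mul_sum_max_zero (x : ι → ℝ) :
    totalDeviation x = 2 * ∑ i, max (x i - mean x) 0 := by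
  have habs : ∀ a : ℝ, |a| = 2 * max a 0 - a := fun a => by
    rcases le_total a 0 with h | h <;> simp [abs_of_nonpos, abs_of_nonneg, h]; ring
  simp_rw [totalDeviation, habs]
  rw [sum_sub_distrib, sum_sub_mean, ← mul_sum, sub_zero]

lemma card_mul_sum_sub_mean [DecidableEq ι] (x : ι → ℝ) (s : Finset ι) :
    (Fintype.card ι : ℝ) * ∑ i ∈ s, (x i - mean x) = ∑ i ∈ s, ∑ j ∈ sᶜ, (x i - x j) := by
  have hwithin : ∑ i ∈ s, ∑ j ∈ s, (x i - x j) = 0 := by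
    simp only [sum_sub_distrib, sum_const, nsmul_eq_mul, ← mul_sum, sub_self]
  calc (Fintype.card ι : ℝ) * ∑ i ∈ s, (x i - mean x)
      = ∑ i ∈ s, ∑ j, (x i - x j) := by
        rw [mul_sum]
        refine sum_congr rfl fun i _ => ?_
        rw [sum_sub_distrib, sum_const, card_univ, nsmul_eq_mul, ← card_mul_mean]
        ring
    _ = ∑ i ∈ s, ∑ j ∈ sᶜ, (x i - x j) := by
        simp only [← sum_add_sum_compl s, sum_add_distrib, hwithin, zero_add]

theorem totalDeviation_le_of_gap_le {x y : ι → ℝ}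
    (hgap : ∀ i j, y j < y i → y i - y j ≤ x i - x j) :
    totalDeviation y ≤ totalDeviation x := by
  classical
  cases isEmpty_or_nonempty ι
  · simp [totalDeviation]
  set A := univ.filter fun i => mean y ≤ y i
  have hcard : (0 : ℝ) < Fintype.card ι := by positivity
  have hy : ∑ i, max (y i - mean y) 0 = ∑ i ∈ A, (y i - mean y) := by
    rw [sum_filter]
    refine sum_congr rfl fun i _ => ?_
    split_ifs with h
    · exact max_eq_left (sub_nonneg.mpr h)
    · exact max_eq_right (by linarith [not_le.mp h])
  have hA : ∑ i ∈ A, (y i - mean y) ≤ ∑ i, max (x i - mean x) 0 := by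
    refine le_of_mul_le_mul_left ?_ hcard
    calc (Fintype.card ι : ℝ) * ∑ i ∈ A, (y i - mean y)
        = ∑ i ∈ A, ∑ j ∈ Aᶜ, (y i - y j) := card_mul_sum_sub_mean y A
      _ ≤ ∑ i ∈ A, ∑ j ∈ Aᶜ, (x i - x j) := by
        refine sum_le_sum fun i hi => sum_le_sum fun j hj => hgap i j ?_
        simp only [A, mem_compl, mem_filter, mem_univ, true_and, not_le] at hi hj
        exact hj.trans_le hi
      _ = (Fintype.card ι : ℝ) * ∑ i ∈ A, (x i - mean x) := (card_mul_sum_sub_mean x A).symm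
      _ ≤ (Fintype.card ι : ℝ) * ∑ i, max (x i - mean x) 0 := by
        gcongr
        exact (sum_le_sum fun i _ => le_max_left _ _).trans
          (sum_le_sum_of_subset_of_nonneg (subset_univ A) fun i _ _ => le_max_right _ _)
  rw [totalDeviation_eq_two_mul_sum_max_zero, totalDeviation_eq_two_mul_sum_max_zero, hy]
  linarith

end Dispersion

lemma max_sub_max_le_of_lt {a b r r' : ℝ} (hr : r ≤ r') (hlt : max b r' < max a r') :
    max a r' - max b r' ≤ max a r - max b r := by
  have ha : r' < a := by
    by_contra! h
    rw [max_eq_right h] at hlt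
    exact (le_max_right b r').not_gt hlt
  rw [max_eq_left ha.le, max_eq_left (hr.trans ha.le)]
  linarith [max_le_max_left b hr]

theorem truncation_dispersion_general
    {n : ℕ} (c : Fin n → ℝ) :
    (∀ r r' : ℝ, r ≤ r' →
      ∑ i, |max (c i) r' - (n : ℝ)⁻¹ * ∑ j, max (c j) r'|
        ≤ ∑ i, |max (c i) r - (n : ℝ)⁻¹ * ∑ j, max (c j) r|) ∧
    (∀ r : ℝ, (∀ i, r ≤ c i) →
      ∑ i, |max (c i) r - (n : ℝ)⁻¹ * ∑ j, max (c j) r|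
        = ∑ i, |c i - (n : ℝ)⁻¹ * ∑ j, c j|) := by
  have hmean : ∀ x : Fin n → ℝ, (n : ℝ)⁻¹ * ∑ j, x j = Dispersion.mean x := by
    simp [Dispersion.mean]
  refine ⟨fun r r' hr => ?_, fun r hr => ?_⟩
  · simp only [hmean]
    exact Dispersion.totalDeviation_le_of_gap_le fun i j => max_sub_max_le_of_lt hr
  · simp only [max_eq_left (hr _)]

/-- For reals `c₁, …, c_n` and truncations `h_i(r) = max {c_i, r}`
with average `h̄(r)`: (i) the total dispersion `∑ |h_i(r) − h̄(r)|` is non-increasing in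
the truncation level `r`, and (ii) if `r ≤ min_i c_i`, then
`∑ |h_i(r) − h̄(r)| = ∑ |c_i − c̄|`. -/
theorem truncation_dispersion
    {n : ℕ} (hn : 1 ≤ n) (c : Fin n → ℝ) :
    (∀ r r' : ℝ, r ≤ r' →
      ∑ i, |max (c i) r' - (n : ℝ)⁻¹ * ∑ j, max (c j) r'|
        ≤ ∑ i, |max (c i) r - (n : ℝ)⁻¹ * ∑ j, max (c j) r|) ∧
    (∀ r : ℝ, (∀ i, r ≤ c i) →
      ∑ i, |max (c i) r - (n : ℝ)⁻¹ * ∑ j, max (c j) r|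
        = ∑ i, |c i - (n : ℝ)⁻¹ * ∑ j, c j|) :=
  truncation_dispersion_general c
end
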